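/- For every s ∈ ℂ with Re(s) > d + |μ|/2 the Eisenstein–Kronecker series K^μ(H,z,w,s,Λ) converges absolutely; moreover, for every σ₀ > d + |μ|/2 and every compact subset C ⊂ ℂ^d × ℂ^d the convergence is uniform on {s : Re(s) ≥ σ₀} × C. -/

import Mathlib

open scoped Real
open Complex MeasureTheory Filter

noncomputable section

/-- The diagonal Hermitian form `H(z,w) = ∑ i, h i * z i * conj (w i)` on `ℂ^d`. -/
def hermH {d : ℕ} (h : Fin d → ℝ) (z w : Fin d → ℂ) : ℂ :=
  ∑ i, (h i : ℂ) * z i * (starRingEnd ℂ) (w i)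

/-- The squared norm `|z|_H² = ∑ i, h i * |z i|²` associated to `H`. -/
def normHsq {d : ℕ} (h : Fin d → ℝ) (z : Fin d → ℂ) : ℝ :=
  ∑ i, h i * Complex.normSq (z i)

/-- The alternating form `⟨z,w⟩ = Im H(z,w)`. -/
def pairH {d : ℕ} (h : Fin d → ℝ) (z w : Fin d → ℂ) : ℝ := (hermH h z w).im

/-- The general term of the Eisenstein–Kronecker series:
`conj (z+λ)^μ ⬝ |z+λ|_H^(-2s) ⬝ e^{2πi⟨λ,w⟩}`. -/
def Kterm {d : ℕ} (h : Fin d → ℝ) (μ : Fin d → ℕ) (z w : Fin d → ℂ) (s : ℂ)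
    (l : Fin d → ℂ) : ℂ :=
  (∏ i, (starRingEnd ℂ) (z i + l i) ^ μ i) *
    ((normHsq h (z + l) : ℂ) ^ (-s)) *
    Complex.exp (2 * (π : ℂ) * Complex.I * (pairH h l w : ℂ))

/-- The general term of the theta series:
`conj (z+λ)^μ ⬝ e^{-πt|z+λ|_H²} ⬝ e^{2πi⟨λ,w⟩}`. -/
def thetaTerm {d : ℕ} (h : Fin d → ℝ) (μ : Fin d → ℕ) (t : ℝ) (z w : Fin d → ℂ)
    (l : Fin d → ℂ) : ℂ :=
  (∏ i, (starRingEnd ℂ) (z i + l i) ^ μ i) *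
    Complex.exp ((-(π * t * normHsq h (z + l)) : ℝ) : ℂ) *
    Complex.exp (2 * (π : ℂ) * Complex.I * (pairH h l w : ℂ))

lemma pairH_add_left {d : ℕ} (h : Fin d → ℝ) (a b w : Fin d → ℂ) :
    pairH h (a + b) w = pairH h a w + pairH h b w := by
  unfold pairH hermH
  rw [← Complex.add_im]
  congr 1
  rw [← Finset.sum_add_distrib]
  refine Finset.sum_congr rfl fun i _ => ?_
  rw [Pi.add_apply]
  ring

lemma pairH_zsmul_left {d : ℕ} (h : Fin d → ℝ) (n : ℤ) (a w : Fin d → ℂ) :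
    pairH h (n • a) w = (n : ℝ) * pairH h a w := by
  unfold pairH hermH
  have key : (∑ i, (h i : ℂ) * (n • a) i * (starRingEnd ℂ) (w i))
      = (n : ℂ) * ∑ i, (h i : ℂ) * a i * (starRingEnd ℂ) (w i) := by
    rw [Finset.mul_sum]
    refine Finset.sum_congr rfl fun i _ => ?_
    rw [Pi.smul_apply, zsmul_eq_mul]
    ring
  rw [key, Complex.mul_im]
  simp

/-- The dual lattice `Λ* = {l : ⟨l, Λ⟩ ⊆ ℤ}` with respect to `⟨·,·⟩ = Im H`. -/
def dualLattice {d : ℕ} (h : Fin d → ℝ) (Λ : Submodule ℤ (Fin d → ℂ)) :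
    Submodule ℤ (Fin d → ℂ) where
  carrier := {l | ∀ x ∈ Λ, ∃ n : ℤ, pairH h l x = (n : ℝ)}
  zero_mem' := by
    intro x _
    exact ⟨0, by simp [pairH, hermH]⟩
  add_mem' := by
    intro a b ha hb x hx
    obtain ⟨m, hm⟩ := ha x hx
    obtain ⟨n, hn⟩ := hb x hx
    exact ⟨m + n, by rw [pairH_add_left, hm, hn]; push_cast; ring⟩
  smul_mem' := by
    intro n a ha x hx
    obtain ⟨m, hm⟩ := ha x hx
    exact ⟨n * m, by rw [pairH_zsmul_left, hm]; push_cast; ring⟩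

/-- The volume of `ℂ^d/Λ` with respect to the metric induced by `H`, i.e. `(∏ i, h i)`
times the Euclidean covolume of `Λ`. -/
def covolH {d : ℕ} (h : Fin d → ℝ) (Λ : Submodule ℤ (Fin d → ℂ)) : ℝ :=
  (∏ i, h i) * ZLattice.covolume Λ

open Classical in
/-- `δ_{μ,v,M} = 1` if `v ∈ M` and `|μ| = 0`, and `0` otherwise. -/
def deltaEK {d : ℕ} (μ : Fin d → ℕ) (v : Fin d → ℂ) (M : Submodule ℤ (Fin d → ℂ)) : ℂ :=
  if v ∈ M ∧ ∑ i, μ i = 0 then 1 else 0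

end


/-!
Positive definiteness of `H` gives `c > 0` with `c ‖v‖² ≤ |v|_H²`, and the phase factor has
modulus one. Hence, uniformly for `‖z‖ ≤ R` and `Re s ≥ σ₀`, the terms with `‖λ‖` large are
bounded by `C ‖λ‖^(|μ| - 2σ₀)`. A discrete subgroup of `ℂ^d ≅ ℝ^(2d)` has rank at most `2d`, so
`∑_{λ ∈ Λ} ‖λ‖^(-r)` converges for `r > 2d`, and the Weierstrass M-test gives both claims.
-/

open Module Topology

section Lattice

variable {E : Type*} [NormedAddCommGroup E] [NormedSpace ℝ E] [FiniteDimensional ℝ E]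
  (L : Submodule ℤ E) [DiscreteTopology L]

lemma finrank_int_le_finrank_real_of_discrete : finrank ℤ L ≤ finrank ℝ E := by
  have hs : DiscreteTopology (Submodule.span ℤ (L : Set E)) := by rwa [Submodule.span_eq]
  have hrank := Real.finrank_eq_int_finrank_of_discrete hs
  rw [Set.finrank, Set.finrank, Submodule.span_eq] at hrank
  exact hrank ▸ Submodule.finrank_le _

lemma summable_norm_rpow_of_discrete {r : ℝ} (hr : r < -finrank ℝ E) :
    Summable fun x : L => ‖(x : E)‖ ^ r :=
  ZLattice.summable_norm_rpow L r <| hr.trans_le <| by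
    gcongr; exact_mod_cast finrank_int_le_finrank_real_of_discrete L

end Lattice

section Kterm

variable {d : ℕ} {h : Fin d → ℝ}

lemma exists_pos_mul_sq_norm_le_normHsq (hpos : ∀ i, 0 < h i) :
    ∃ c > 0, ∀ v, c * ‖v‖ ^ 2 ≤ normHsq h v := by
  obtain ⟨c, hch, hc0⟩ : ∃ c, (∀ i, c < h i) ∧ 0 < c :=
    ((eventually_all.2 fun i => eventually_lt_nhds (hpos i)).filter_mono nhdsWithin_le_nhds
      |>.and self_mem_nhdsWithin).exists (f := 𝓝[>] (0 : ℝ))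
  refine ⟨c, hc0, fun v => ?_⟩
  have hterm : ∀ i, 0 ≤ h i * Complex.normSq (v i) :=
    fun i => mul_nonneg (hpos i).le (Complex.normSq_nonneg _)
  have hN : 0 ≤ normHsq h v / c := div_nonneg (Finset.sum_nonneg fun i _ => hterm i) hc0.le
  have hv : ‖v‖ ≤ √(normHsq h v / c) := by
    refine (pi_norm_le_iff_of_nonneg (Real.sqrt_nonneg _)).2 fun i => ?_
    refine Real.le_sqrt_of_sq_le ((le_div_iff₀ hc0).2 ?_)
    calc ‖v i‖ ^ 2 * c ≤ h i * Complex.normSq (v i) := by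
          rw [Complex.normSq_eq_norm_sq, mul_comm]; gcongr; exact (hch i).le
      _ ≤ normHsq h v :=
          Finset.single_le_sum (f := fun i => h i * Complex.normSq (v i))
            (fun i _ => hterm i) (Finset.mem_univ i)
  calc c * ‖v‖ ^ 2 ≤ c * (normHsq h v / c) := by
        gcongr; exact (Real.le_sqrt (norm_nonneg _) hN).1 hv
    _ = normHsq h v := mul_div_cancel₀ _ hc0.ne'

lemma norm_Kterm (μ : Fin d → ℕ) {z l : Fin d → ℂ} (w : Fin d → ℂ) (s : ℂ)
    (hN : 0 < normHsq h (z + l)) :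
    ‖Kterm h μ z w s l‖ = (∏ i, ‖z i + l i‖ ^ μ i) * normHsq h (z + l) ^ (-s.re) := by
  have hphase : ‖Complex.exp (2 * π * I * (pairH h l w : ℂ))‖ = 1 := by
    rw [Complex.norm_exp]; simp
  rw [Kterm, norm_mul, norm_mul, hphase, mul_one, norm_prod,
    Complex.norm_cpow_eq_rpow_re_of_pos hN, neg_re]
  simp only [norm_pow, RCLike.norm_conj]

lemma prod_norm_pow_le_norm_pow_sum {ι F : Type*} [Fintype ι] [SeminormedAddCommGroup F]
    (v : ι → F) (μ : ι → ℕ) : ∏ i, ‖v i‖ ^ μ i ≤ ‖v‖ ^ ∑ i, μ i := by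
  rw [← Finset.prod_pow_eq_pow_sum]
  exact Finset.prod_le_prod (fun i _ => by positivity) fun i _ => by
    gcongr; exact norm_le_pi_norm v i

lemma norm_Kterm_le {c σ : ℝ} (hc0 : 0 < c) (hc : ∀ v, c * ‖v‖ ^ 2 ≤ normHsq h v)
    (μ : Fin d → ℕ) {z l : Fin d → ℂ} (w : Fin d → ℂ) {s : ℂ} (hσ : 0 ≤ σ) (hs : σ ≤ s.re)
    (hzl : 1 ≤ c * ‖z + l‖ ^ 2) :
    ‖Kterm h μ z w s l‖ ≤ c ^ (-σ) * ‖z + l‖ ^ ((∑ i, (μ i : ℝ)) - 2 * σ) := by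
  have hN : 1 ≤ normHsq h (z + l) := hzl.trans (hc _)
  have hzl0 : 0 < ‖z + l‖ := (norm_nonneg _).lt_of_ne' fun h0 => by norm_num [h0] at hzl
  rw [norm_Kterm μ w s (by linarith)]
  calc (∏ i, ‖z i + l i‖ ^ μ i) * normHsq h (z + l) ^ (-s.re)
      ≤ ‖z + l‖ ^ (∑ i, μ i) * (c * ‖z + l‖ ^ 2) ^ (-σ) := by
        gcongr
        · exact prod_norm_pow_le_norm_pow_sum (z + l) μ
        · calc normHsq h (z + l) ^ (-s.re) ≤ normHsq h (z + l) ^ (-σ) :=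
                Real.rpow_le_rpow_of_exponent_le hN (by linarith)
            _ ≤ (c * ‖z + l‖ ^ 2) ^ (-σ) :=
                Real.rpow_le_rpow_of_nonpos (by positivity) (hc _) (by linarith)
    _ = c ^ (-σ) * ‖z + l‖ ^ ((∑ i, (μ i : ℝ)) - 2 * σ) := by
        rw [Real.mul_rpow hc0.le (by positivity), ← Real.rpow_natCast, ← Real.rpow_natCast,
          ← Real.rpow_mul hzl0.le, sub_eq_add_neg, Real.rpow_add hzl0]
        push_cast
        ring_nf

lemma eventually_norm_Kterm_le (hpos : ∀ i, 0 < h i) (μ : Fin d → ℕ) {σ₀ : ℝ}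
    (hσ₀ : ∑ i, (μ i : ℝ) < 2 * σ₀) (R : ℝ) :
    ∃ C, ∀ᶠ l in cocompact (Fin d → ℂ), ∀ z w s, ‖z‖ ≤ R → σ₀ ≤ s.re →
      ‖Kterm h μ z w s l‖ ≤ C * ‖l‖ ^ ((∑ i, (μ i : ℝ)) - 2 * σ₀) := by
  obtain ⟨c, hc0, hc⟩ := exists_pos_mul_sq_norm_le_normHsq hpos
  have hm : 0 ≤ ∑ i, (μ i : ℝ) := by positivity
  have hnorm := tendsto_norm_cocompact_atTop (E := Fin d → ℂ)
  have hlarge : Tendsto (fun l : Fin d → ℂ => c * (‖l‖ / 2) ^ 2) (cocompact _) atTop :=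
    ((tendsto_pow_atTop two_ne_zero).comp (hnorm.atTop_div_const two_pos)).const_mul_atTop hc0
  refine ⟨c ^ (-σ₀) * 2 ^ (2 * σ₀ - ∑ i, (μ i : ℝ)), ?_⟩
  filter_upwards [hnorm.eventually_ge_atTop (2 * R), hlarge.eventually_ge_atTop 1]
    with l hlR hlc z w s hz hs
  have hzl : ‖l‖ / 2 ≤ ‖z + l‖ := by
    have := norm_sub_norm_le l (-z)
    rw [sub_neg_eq_add, norm_neg, add_comm] at this
    linarith
  have hl0 : 0 < ‖l‖ / 2 :=
    (by positivity : 0 ≤ ‖l‖ / 2).lt_of_ne' fun h0 => by norm_num [h0] at hlc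
  calc ‖Kterm h μ z w s l‖ ≤ c ^ (-σ₀) * ‖z + l‖ ^ ((∑ i, (μ i : ℝ)) - 2 * σ₀) :=
        norm_Kterm_le (σ := σ₀) hc0 hc μ w (by linarith) hs (hlc.trans (by gcongr))
    _ ≤ c ^ (-σ₀) * (‖l‖ / 2) ^ ((∑ i, (μ i : ℝ)) - 2 * σ₀) := by
        have := Real.rpow_le_rpow_of_nonpos hl0 hzl (by linarith : (∑ i, (μ i : ℝ)) - 2 * σ₀ ≤ 0)
        gcongr
    _ = c ^ (-σ₀) * 2 ^ (2 * σ₀ - ∑ i, (μ i : ℝ)) * ‖l‖ ^ ((∑ i, (μ i : ℝ)) - 2 * σ₀) := by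
        rw [Real.div_rpow (norm_nonneg _) zero_le_two, div_eq_mul_inv, ← Real.rpow_neg zero_le_two,
          neg_sub]
        ring

end Kterm

lemma exists_summable_majorant_Kterm {d : ℕ} {h : Fin d → ℝ} (hpos : ∀ i, 0 < h i)
    (Λ : Submodule ℤ (Fin d → ℂ)) [DiscreteTopology Λ] (μ : Fin d → ℕ) {σ₀ : ℝ}
    (hσ₀ : (d : ℝ) + (∑ i, (μ i : ℝ)) / 2 < σ₀) (R : ℝ) :
    ∃ u : Λ → ℝ, Summable u ∧ ∀ᶠ l : Λ in cofinite, ∀ z w s, ‖z‖ ≤ R → σ₀ ≤ s.re →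
      ‖Kterm h μ z w s l‖ ≤ u l := by
  have hd : (0 : ℝ) ≤ d := d.cast_nonneg
  obtain ⟨C, hC⟩ := eventually_norm_Kterm_le hpos μ (by linarith) R
  refine ⟨_, (summable_norm_rpow_of_discrete Λ ?_).mul_left C,
    (Λ.toAddSubgroup.tendsto_coe_cofinite_of_discrete
      (isDiscrete_iff_discreteTopology.mpr ‹_›)).eventually hC⟩
  have hrank : finrank ℝ (Fin d → ℂ) = 2 * d := by simp [finrank_pi_fintype, mul_comm]
  rw [hrank]
  push_cast
  linarith

theorem eisensteinKronecker_summable_and_tendstoUniformlyOn_general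
    {d : ℕ} (h : Fin d → ℝ) (hpos : ∀ i, 0 < h i)
    (Λ : Submodule ℤ (Fin d → ℂ)) [DiscreteTopology Λ]
    (μ : Fin d → ℕ) :
    (∀ (z w : Fin d → ℂ) (s : ℂ), (d : ℝ) + (∑ i, (μ i : ℝ)) / 2 < s.re →
      Summable fun l : {l : Λ // (l : Fin d → ℂ) ≠ -z} =>
        ‖Kterm h μ z w s ((l : Λ) : Fin d → ℂ)‖) ∧
    (∀ σ₀ : ℝ, (d : ℝ) + (∑ i, (μ i : ℝ)) / 2 < σ₀ →
      ∀ C : Set ((Fin d → ℂ) × (Fin d → ℂ)), IsCompact C →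
      TendstoUniformlyOn
        (fun (t : Finset Λ) (p : ℂ × ((Fin d → ℂ) × (Fin d → ℂ))) =>
          ∑ l ∈ t, Kterm h μ p.2.1 p.2.2 p.1 (l : Fin d → ℂ))
        (fun p => ∑' l : Λ, Kterm h μ p.2.1 p.2.2 p.1 (l : Fin d → ℂ))
        Filter.atTop ({s : ℂ | σ₀ ≤ s.re} ×ˢ C)) := by
  constructor
  · intro z w s hs
    obtain ⟨u, hu, hle⟩ := exists_summable_majorant_Kterm hpos Λ μ hs ‖z‖
    refine (hu.of_norm_bounded_eventually (f := fun l : Λ => ‖Kterm h μ z w s l‖) ?_).subtype _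
    filter_upwards [hle] with l hl
    simpa using hl z w s le_rfl le_rfl
  · intro σ₀ hσ₀ C hC
    obtain ⟨R, hR⟩ := hC.isBounded.exists_norm_le
    obtain ⟨u, hu, hle⟩ := exists_summable_majorant_Kterm hpos Λ μ hσ₀ R
    refine tendstoUniformlyOn_tsum_of_cofinite_eventually hu ?_
    filter_upwards [hle] with l hl p hp
    exact hl _ _ _ ((norm_fst_le p.2).trans (hR _ hp.2)) hp.1

/-- For every `s` with `Re s > d + |μ|/2` the Eisenstein–Kronecker series
`K^μ(H,z,w,s,Λ) = ∑_{λ ∈ Λ, λ ≠ -z} conj(z+λ)^μ |z+λ|_H^{-2s} e^{2πi⟨λ,w⟩}`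
converges absolutely; moreover for every `σ₀ > d + |μ|/2` and every compact
`C ⊆ ℂ^d × ℂ^d` the convergence is uniform on `{s : Re s ≥ σ₀} × C`.
(On this region the term at `λ = -z` vanishes identically, so summing over all of `Λ`
in the uniform statement agrees with the sum over `λ ≠ -z`.) -/
theorem eisensteinKronecker_summable_and_tendstoUniformlyOn
    {d : ℕ} (hd : 1 ≤ d) (h : Fin d → ℝ) (hpos : ∀ i, 0 < h i)
    (Λ : Submodule ℤ (Fin d → ℂ)) [DiscreteTopology Λ] [IsZLattice ℝ Λ]
    (μ : Fin d → ℕ) :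
    (∀ (z w : Fin d → ℂ) (s : ℂ), (d : ℝ) + (∑ i, (μ i : ℝ)) / 2 < s.re →
      Summable fun l : {l : Λ // (l : Fin d → ℂ) ≠ -z} =>
        ‖Kterm h μ z w s ((l : Λ) : Fin d → ℂ)‖) ∧
    (∀ σ₀ : ℝ, (d : ℝ) + (∑ i, (μ i : ℝ)) / 2 < σ₀ →
      ∀ C : Set ((Fin d → ℂ) × (Fin d → ℂ)), IsCompact C →
      TendstoUniformlyOn
        (fun (t : Finset Λ) (p : ℂ × ((Fin d → ℂ) × (Fin d → ℂ))) =>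
          ∑ l ∈ t, Kterm h μ p.2.1 p.2.2 p.1 (l : Fin d → ℂ))
        (fun p => ∑' l : Λ, Kterm h μ p.2.1 p.2.2 p.1 (l : Fin d → ℂ))
        Filter.atTop ({s : ℂ | σ₀ ≤ s.re} ×ˢ C)) :=
  eisensteinKronecker_summable_and_tendstoUniformlyOn_general h hpos Λ μ
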